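/- Double robustness, model for nonresponse correct: Let π_r(L) = P(R=r|L) be the true nonresponse probabilities with π_1(L) > 0 a.s., and let m_r(L_{(r)}) be arbitrary (possibly misspecified) functions. Then E[ 1(R=1)U(L)/π_1(L) − (1(R=1)/π_1(L))·Σ_{r≠1} π_r(L)·m_r(L_{(r)}) + Σ_{r≠1} 1(R=r)·m_r(L_{(r)}) ] = E[U(L)]. -/

import Mathlib

open Finset MeasureTheory

open Classical in
noncomputable def pr {Ω : Type*} [Fintype Ω] (P : Ω → ℝ) (E : Ω → Prop) : ℝ :=
  ∑ ω, if E ω then P ω else 0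

noncomputable def cpr {Ω : Type*} [Fintype Ω] (P : Ω → ℝ) (E F : Ω → Prop) : ℝ :=
  pr P (fun ω => E ω ∧ F ω) / pr P F

noncomputable def ex {Ω : Type*} [Fintype Ω] (P : Ω → ℝ) (U : Ω → ℝ) : ℝ :=
  ∑ ω, P ω * U ω

open Classical in
noncomputable def cex {Ω : Type*} [Fintype Ω] (P : Ω → ℝ) (U : Ω → ℝ) (F : Ω → Prop) : ℝ :=
  (∑ ω, if F ω then P ω * U ω else 0) / pr P F

/-!
Conditioning on `L`: for an event `E` with `q(L) = P(E | L)`, the tower property gives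
`E[1_E g(L)] = E[q(L) g(L)]`. Applied to `E = {R = 0}` it turns the inverse-weighted
complete-case term into `E[U(L) - Σ_{r ≠ 0} π_r(L) m_r]`, and applied to `E = {R = r}` it turns
each augmentation term into `E[π_r(L) m_r]`; the two sums of `m_r` terms cancel.
-/

section Expectation

variable {Ω : Type*} [Fintype Ω] {P : Ω → ℝ}

lemma ex_add (f g : Ω → ℝ) : ex P (fun ω => f ω + g ω) = ex P f + ex P g := by
  simp only [ex, mul_add, sum_add_distrib]

lemma ex_sum {ι : Type*} (s : Finset ι) (f : ι → Ω → ℝ) :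
    ex P (fun ω => ∑ i ∈ s, f i ω) = ∑ i ∈ s, ex P (f i) := by
  simp only [ex, mul_sum]
  exact sum_comm

lemma ex_congr_of_ne_zero {f g : Ω → ℝ} (h : ∀ ω, P ω ≠ 0 → f ω = g ω) :
    ex P f = ex P g := by
  refine sum_congr rfl fun ω _ => ?_
  by_cases hω : P ω = 0
  · simp [hω]
  · rw [h ω hω]

lemma pr_nonneg (hP : ∀ ω, 0 ≤ P ω) (E : Ω → Prop) : 0 ≤ pr P E := by
  classical
  exact sum_nonneg fun ω _ => ite_nonneg (hP ω) le_rfl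

lemma pr_mono (hP : ∀ ω, 0 ≤ P ω) {E F : Ω → Prop} (hEF : ∀ ω, E ω → F ω) :
    pr P E ≤ pr P F := by
  classical
  refine sum_le_sum fun ω _ => ?_
  by_cases hE : E ω
  · simp [hE, hEF ω hE]
  · split_ifs <;> simp [hP ω]

lemma pr_pos_of_ne_zero (hP : ∀ ω, 0 ≤ P ω) {F : Ω → Prop} {ω : Ω} (hF : F ω)
    (hω : P ω ≠ 0) : 0 < pr P F := by
  classical
  calc 0 < P ω := (hP ω).lt_of_ne' hω
    _ = if F ω then P ω else 0 := (if_pos hF).symm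
    _ ≤ pr P F := single_le_sum (f := fun ω => if F ω then P ω else 0)
      (fun ω _ => ite_nonneg (hP ω) le_rfl) (mem_univ ω)

lemma pr_and_eq_mul_pr (hP : ∀ ω, 0 ≤ P ω) {E F : Ω → Prop} {q : ℝ}
    (hq : 0 < pr P F → q = cpr P E F) : pr P (fun ω => E ω ∧ F ω) = q * pr P F := by
  rcases (pr_nonneg hP F).lt_or_eq with hF | hF
  · rw [hq hF, cpr, div_mul_cancel₀ _ hF.ne']
  · rw [← hF, mul_zero]
    exact le_antisymm (hF ▸ pr_mono hP fun _ h => h.2) (pr_nonneg hP _)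

open Classical in
lemma ex_ite_comp_eq_sum_pr {A : Type*} (E : Ω → Prop) [DecidablePred E] (L : Ω → A)
    (g : A → ℝ) :
    ex P (fun ω => if E ω then g (L ω) else 0)
      = ∑ l ∈ univ.image L, pr P (fun ω => E ω ∧ L ω = l) * g l := by
  rw [ex, ← sum_fiberwise_of_maps_to fun ω _ => mem_image_of_mem L (mem_univ ω)]
  refine sum_congr rfl fun l _ => ?_
  rw [pr, sum_mul, sum_filter]
  refine sum_congr rfl fun ω _ => ?_
  by_cases hL : L ω = l <;> by_cases hE : E ω <;> simp [hL, hE]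

lemma ex_ite_comp_eq_ex_mul {A : Type*} (hP : ∀ ω, 0 ≤ P ω) (E : Ω → Prop)
    [DecidablePred E] (L : Ω → A) (q : A → ℝ)
    (hq : ∀ l, 0 < pr P (fun ω => L ω = l) → q l = cpr P E (fun ω => L ω = l))
    (g : A → ℝ) :
    ex P (fun ω => if E ω then g (L ω) else 0) = ex P (fun ω => q (L ω) * g (L ω)) := by
  classical
  have htrue := ex_ite_comp_eq_sum_pr (P := P) (fun _ => True) L (fun l => q l * g l)
  simp only [if_true, true_and] at htrue
  rw [htrue, ex_ite_comp_eq_sum_pr]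
  refine sum_congr rfl fun l _ => ?_
  rw [pr_and_eq_mul_pr hP (hq l)]
  ring

end Expectation

theorem stmt9_general {Ω A : Type*} [Fintype Ω] {J : ℕ} {B : Fin (J + 1) → Type*}
    (P : Ω → ℝ) (hP : ∀ ω, 0 ≤ P ω)
    (R : Ω → Fin (J + 1)) (L : Ω → A)
    (O : (r : Fin (J + 1)) → A → B r) (U : A → ℝ)
    (π : Fin (J + 1) → A → ℝ)
    (hπ : ∀ (r : Fin (J + 1)) (l : A), 0 < pr P (fun ω => L ω = l) →
      π r l = cpr P (fun ω => R ω = r) (fun ω => L ω = l))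
    (hpos : ∀ l : A, 0 < pr P (fun ω => L ω = l) → 0 < π 0 l)
    (m : (r : Fin (J + 1)) → B r → ℝ) :
    ex P (fun ω =>
        (if R ω = 0 then
          (U (L ω) -
            ∑ r ∈ Finset.univ.erase (0 : Fin (J + 1)),
              π r (L ω) * m r (O r (L ω))) / π 0 (L ω)
        else 0) +
        ∑ r ∈ Finset.univ.erase (0 : Fin (J + 1)),
          (if R ω = r then m r (O r (L ω)) else 0)) =
      ex P (fun ω => U (L ω)) := by
  let S : A → ℝ := fun l => ∑ r ∈ univ.erase 0, π r l * m r (O r l)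
  have hcomplete : ex P (fun ω => if R ω = 0 then (U (L ω) - S (L ω)) / π 0 (L ω) else 0)
      = ex P (fun ω => U (L ω) - S (L ω)) := by
    rw [ex_ite_comp_eq_ex_mul hP _ L _ (hπ 0) fun l => (U l - S l) / π 0 l]
    refine ex_congr_of_ne_zero fun ω hω => ?_
    have := (hpos _ (pr_pos_of_ne_zero hP rfl hω)).ne'
    field_simp
  have haugment : ex P (fun ω => ∑ r ∈ univ.erase 0, if R ω = r then m r (O r (L ω)) else 0)
      = ex P (fun ω => S (L ω)) := by
    rw [ex_sum, ex_sum]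
    exact sum_congr rfl fun r _ =>
      ex_ite_comp_eq_ex_mul hP _ L _ (hπ r) fun l => m r (O r l)
  rw [ex_add, hcomplete, haugment, ← ex_add]
  simp only [sub_add_cancel]

/-- Double robustness when the nonresponse model is correct: with the true
nonresponse probabilities `π_r(L) = P(R=r|L)`, `π₀ > 0`, and arbitrary functions
`m_r` of the observed components, the augmented IPW estimating function is unbiased for
`E[U(L)]`. Pattern `0` is the complete-case pattern. -/
theorem stmt9 {Ω A : Type*} [Fintype Ω] {J : ℕ} {B : Fin (J + 1) → Type*}
    (P : Ω → ℝ) (hP : ∀ ω, 0 ≤ P ω) (hPsum : ∑ ω, P ω = 1)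
    (R : Ω → Fin (J + 1)) (L : Ω → A)
    (O : (r : Fin (J + 1)) → A → B r) (U : A → ℝ)
    (π : Fin (J + 1) → A → ℝ)
    (hπ : ∀ (r : Fin (J + 1)) (l : A), 0 < pr P (fun ω => L ω = l) →
      π r l = cpr P (fun ω => R ω = r) (fun ω => L ω = l))
    (hpos : ∀ l : A, 0 < pr P (fun ω => L ω = l) → 0 < π 0 l)
    (m : (r : Fin (J + 1)) → B r → ℝ) :
    ex P (fun ω =>
        (if R ω = 0 then
          (U (L ω) -
            ∑ r ∈ Finset.univ.erase (0 : Fin (J + 1)),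
              π r (L ω) * m r (O r (L ω))) / π 0 (L ω)
        else 0) +
        ∑ r ∈ Finset.univ.erase (0 : Fin (J + 1)),
          (if R ω = r then m r (O r (L ω)) else 0)) =
      ex P (fun ω => U (L ω)) :=
  stmt9_general P hP R L O U π hπ hpos m
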